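/- arXiv:0905.3203 — 2 statements merged into one kernel-verified Lean document; each statement's English description precedes it below -/
import Mathlib

section
/- If Q_h is L²-stable with constant C₀, the L²-orthogonal projection P_h onto S_h is H¹-stable with constant C₁, and the inverse inequality |w_h|_{H¹(Ω)} ≤ C₂ h⁻¹ ‖w_h‖_{L²(Ω)} holds on S_h, then Q_h is H¹-stable: there is a constant C, depending only on C₀, C₁, C₂ and the approximation constant of P_h, such that |Q_h w|_{H¹(Ω)} ≤ C |w|_{H¹(Ω)} for all w ∈ H¹(Ω). -/
/-!
Since `Q_h` fixes `S_h ∋ P_h w`, we have `Q_h w = Q_h (w - P_h w) + P_h w`. The second term is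
controlled by the `H¹`-stability of `P_h`. The first lies in `S_h`, so the inverse inequality,
the `L²`-stability of `Q_h` and the approximation property of `P_h` bound it by
`C₂ h⁻¹ · C₀ · C₃ h |w|₁`: the factor `h⁻¹` lost in the inverse inequality is exactly recovered
from the approximation property.
-/

theorem Seminorm.map_le_map_sub_add {𝕜 E : Type*} [NormedField 𝕜] [AddCommGroup E] [Module 𝕜 E]
    (s : Seminorm 𝕜 E) (Q P : E →ₗ[𝕜] E) (w : E) (hQP : Q (P w) = P w) :
    s (Q w) ≤ s (Q (w - P w)) + s (P w) := by
  have hsplit : Q w = Q (w - P w) + P w := by rw [map_sub, hQP, sub_add_cancel]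
  exact hsplit ▸ map_add_le_add s _ _

theorem Seminorm.map_le_of_inverse_estimate {E : Type*} [SeminormedAddCommGroup E]
    [NormedSpace ℝ E] (S : Submodule ℝ E) (s : Seminorm ℝ E) (Q : E →ₗ[ℝ] E) {C₀ K : ℝ}
    (hK : 0 ≤ K) (hQrange : ∀ v, Q v ∈ S) (hQL2 : ∀ v, ‖Q v‖ ≤ C₀ * ‖v‖)
    (hinv : ∀ v ∈ S, s v ≤ K * ‖v‖) (v : E) :
    s (Q v) ≤ K * (C₀ * ‖v‖) :=
  (hinv _ (hQrange v)).trans (mul_le_mul_of_nonneg_left (hQL2 v) hK)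

/-- Here `H` plays the role of `L²(Ω)`, `S` of the finite element space `S_h`, and the
seminorm `s` of the `H¹(Ω)`-seminorm. -/
theorem quasi_projection_H1_stability
    {H : Type*} [NormedAddCommGroup H] [InnerProductSpace ℝ H]
    (S : Submodule ℝ H) (s : Seminorm ℝ H)
    (h C₀ C₁ C₂ C₃ : ℝ) (hh : 0 < h)
    (hC₀ : 0 < C₀) (hC₁ : 0 < C₁) (hC₂ : 0 < C₂) (hC₃ : 0 < C₃)
    (Q P : H →ₗ[ℝ] H)
    (hQrange : ∀ v : H, Q v ∈ S) (hPrange : ∀ v : H, P v ∈ S)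
    (hQid : ∀ v ∈ S, Q v = v)
    (hQL2 : ∀ v : H, ‖Q v‖ ≤ C₀ * ‖v‖)
    (hPH1 : ∀ w : H, s (P w) ≤ C₁ * s w)
    (hinv : ∀ v ∈ S, s v ≤ C₂ / h * ‖v‖)
    (happrox : ∀ w : H, ‖w - P w‖ ≤ C₃ * h * s w) :
    ∃ C : ℝ, 0 < C ∧ C = C₀ * C₂ * C₃ + C₁ ∧ ∀ w : H, s (Q w) ≤ C * s w := by
  refine ⟨C₀ * C₂ * C₃ + C₁, by positivity, rfl, fun w => ?_⟩
  calc s (Q w) ≤ s (Q (w - P w)) + s (P w) :=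
        s.map_le_map_sub_add Q P w (hQid _ (hPrange w))
    _ ≤ C₂ / h * (C₀ * ‖w - P w‖) + C₁ * s w :=
        add_le_add (s.map_le_of_inverse_estimate S Q (by positivity) hQrange hQL2 hinv _)
          (hPH1 w)
    _ ≤ C₂ / h * (C₀ * (C₃ * h * s w)) + C₁ * s w := by gcongr; exact happrox w
    _ = (C₀ * C₂ * C₃ + C₁) * s w := by field_simp
end

section
/- Let q ∈ H¹(Ω) be such that q restricted to the patch S(T) of an element T is a quadratic polynomial. Then the quasi-projection Q_h reproduces its gradient locally: Q_h ∇q = ∇q on T. -/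
/-!
For `i ∈ I`, `μᵢ` vanishes off `S`, where `v = Σⱼ wⱼ φⱼ`, so biorthogonality recovers the
coefficient: `∫ μᵢ v = wᵢ cᵢ`. The remaining `φᵢ` vanish on `T`, so on `T` the quasi-projection
is `Σᵢ wᵢ φᵢ = v`.
-/

open MeasureTheory Finset

section Biorthogonal

variable {X ι : Type*} [MeasurableSpace X] [Fintype ι] [DecidableEq ι] {ν : Measure X}
  {μ : X → ℝ} {φ : ι → X → ℝ} {c : ι → ℝ} {i : ι}

lemma integral_mul_sum_eq_of_biorthogonal
    (hbi : ∀ j, ∫ x, μ x * φ j x ∂ν = if i = j then c j else 0)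
    (hint : ∀ j, Integrable (fun x => μ x * φ j x) ν) (w : ι → ℝ) :
    ∫ x, μ x * ∑ j, w j * φ j x ∂ν = w i * c i := by
  simp_rw [mul_sum, mul_left_comm (μ _)]
  rw [integral_finsetSum _ fun j _ => (hint j).const_mul (w j)]
  simp_rw [integral_const_mul, hbi, mul_ite, mul_zero, sum_ite_eq, mem_univ, if_true]

lemma integral_mul_eq_of_biorthogonal_of_eqOn {S : Set X} {v : X → ℝ} {w : ι → ℝ}
    (hbi : ∀ j, ∫ x, μ x * φ j x ∂ν = if i = j then c j else 0)
    (hint : ∀ j, Integrable (fun x => μ x * φ j x) ν)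
    (hsupp : ∀ x ∉ S, μ x = 0) (hv : ∀ x ∈ S, v x = ∑ j, w j * φ j x) :
    ∫ x, μ x * v x ∂ν = w i * c i := by
  have hμv : (fun x => μ x * v x) = fun x => μ x * ∑ j, w j * φ j x := by
    funext x
    by_cases hx : x ∈ S
    · rw [hv x hx]
    · rw [hsupp x hx, zero_mul, zero_mul]
  rw [hμv, integral_mul_sum_eq_of_biorthogonal hbi hint]

end Biorthogonal

/-- `S` is the patch `S(T)`, `I` indexes the nodes whose basis functions do not vanish on `T`, and
`v` is a component of `∇q`, which is linear on `S` and hence `Σⱼ wⱼ φⱼ` there. -/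
theorem quasi_projection_local_reproduction_general
    {X : Type*} [MeasurableSpace X] (ν : Measure X)
    (n : ℕ) (φ μ : Fin n → X → ℝ) (c : Fin n → ℝ)
    (hc : ∀ j, c j ≠ 0)
    (hbi : ∀ i j, ∫ x, μ i x * φ j x ∂ν = if i = j then c j else 0)
    (T S : Set X) (hTS : T ⊆ S)
    (I : Finset (Fin n))
    (hsupp : ∀ i ∈ I, ∀ x ∉ S, μ i x = 0)
    (hφT : ∀ j ∉ I, ∀ x ∈ T, φ j x = 0)
    (v : X → ℝ) (w : Fin n → ℝ)
    (hv : ∀ x ∈ S, v x = ∑ j, w j * φ j x)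
    (hintφ : ∀ i j, Integrable (fun x => μ i x * φ j x) ν) :
    ∀ x ∈ T, (∑ i, (∫ y, μ i y * v y ∂ν) / c i * φ i x) = v x := by
  intro x hx
  rw [hv x (hTS hx)]
  refine sum_congr rfl fun i _ => ?_
  by_cases hi : i ∈ I
  · rw [integral_mul_eq_of_biorthogonal_of_eqOn (hbi i) (hintφ i) (hsupp i hi) hv,
      mul_div_cancel_right₀ _ (hc i)]
  · rw [hφT i hi x hx, mul_zero, mul_zero]

/-- Local reproduction property of the quasi-projection `Q_h` (Lemma 4): if `v`
(a component of the gradient `∇q` of a quadratic polynomial `q`) coincides on the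
patch `S = S(T)` with a function in the span of the nodal basis `φ₁, …, φ_n`, then
`Q_h v = Σᵢ (∫ μᵢ v / cᵢ) φᵢ` equals `v` on the element `T`.  Here `{μᵢ}` is the
dual basis, biorthogonal to `{φᵢ}`, the `μᵢ` relevant to `T` (those in `I`) are
supported in the patch `S`, and the remaining `φⱼ` vanish on `T`. -/
theorem quasi_projection_local_reproduction
    {X : Type*} [MeasurableSpace X] (ν : Measure X)
    (n : ℕ) (φ μ : Fin n → X → ℝ) (c : Fin n → ℝ)
    (hc : ∀ j, c j ≠ 0)
    (hbi : ∀ i j, ∫ x, μ i x * φ j x ∂ν = if i = j then c j else 0)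
    (T S : Set X) (hTS : T ⊆ S)
    (I : Finset (Fin n))
    (hsupp : ∀ i ∈ I, ∀ x ∉ S, μ i x = 0)
    (hφT : ∀ j ∉ I, ∀ x ∈ T, φ j x = 0)
    (v : X → ℝ) (w : Fin n → ℝ)
    (hv : ∀ x ∈ S, v x = ∑ j, w j * φ j x)
    (hint : ∀ i, Integrable (fun x => μ i x * v x) ν)
    (hintφ : ∀ i j, Integrable (fun x => μ i x * φ j x) ν) :
    ∀ x ∈ T, (∑ i, (∫ y, μ i y * v y ∂ν) / c i * φ i x) = v x :=
  quasi_projection_local_reproduction_general ν n φ μ c hc hbi T S hTS I hsupp hφT v w hv hintφ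
end
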